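/- Let G be a finite group with trivial center and let a ∈ G. Then the set A_G(a) := {x ∈ G : ∼_x refines ∼_a} is the underlying set of an abelian subgroup of G. -/
import Mathlib


/-- A subrack of a group `G` is a subset closed under conjugation from within. -/
def IsSubrack {G : Type*} [Group G] (S : Set G) : Prop :=
  ∀ a ∈ S, ∀ b ∈ S, a * b * a⁻¹ ∈ S

/-- The subrack of `G` generated by a subset `T`: the smallest subrack containing `T`. -/
def subrackClosure {G : Type*} [Group G] (T : Set G) : Set G :=
  ⋂₀ {S : Set G | IsSubrack S ∧ T ⊆ S}

/-- The conjugacy class of `a` in `G`. -/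
def conjClass {G : Type*} [Group G] (a : G) : Set G :=
  {x : G | ∃ g : G, g * a * g⁻¹ = x}

/-- `B_G(a, g) = ⟨{a, g}⟩_rk ∩ K_G(g)`. -/
def subrackB {G : Type*} [Group G] (a g : G) : Set G :=
  subrackClosure {a, g} ∩ conjClass g

/-- The relation `∼ₐ` whose equivalence classes form the hypothetical pseudo cycle
form of `a`: `g ∼ₐ h` iff `g` and `h` lie in exactly the same sets `B_G(a, y)`. -/
def pseudoRel {G : Type*} [Group G] (a : G) (g h : G) : Prop :=
  ∀ y : G, g ∈ subrackB a y ↔ h ∈ subrackB a y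

/-- The abelian set associated with `a`: elements `x` such that `∼ₓ` refines `∼ₐ`. -/
def assocAbelianSet {G : Type*} [Group G] (a : G) : Set G :=
  {x : G | ∀ g h : G, pseudoRel x g h → pseudoRel a g h}

/-- The relation `≈ₐ` whose equivalence classes form the hypothetical cycle form of `a`. -/
def cycleRel {G : Type*} [Group G] (a : G) (g h : G) : Prop :=
  pseudoRel a g h ∧
    ∀ x : G, x * a = a * x → (x * g * x⁻¹ = g ↔ x * h * x⁻¹ = h)

section Aux

variable {G : Type*} [Group G]

lemma subset_subrackClosure (T : Set G) : T ⊆ subrackClosure T := by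
  intro t ht S hS
  exact hS.2 ht

lemma isSubrack_subrackClosure (T : Set G) : IsSubrack (subrackClosure T) := by
  intro a ha b hb S hS
  exact hS.1 a (ha S hS) b (hb S hS)

lemma subrackClosure_subset {T S : Set G} (h1 : IsSubrack S) (h2 : T ⊆ S) :
    subrackClosure T ⊆ S :=
  Set.sInter_subset_of_mem ⟨h1, h2⟩

lemma self_mem_conjClass (g : G) : g ∈ conjClass g := ⟨1, by group⟩

lemma conj_mem_conjClass {y u : G} (hu : u ∈ conjClass y) (c : G) :
    c * u * c⁻¹ ∈ conjClass y := by
  obtain ⟨p, rfl⟩ := hu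
  exact ⟨c * p, by group⟩

lemma self_mem_subrackB (x g : G) : g ∈ subrackB x g :=
  ⟨subset_subrackClosure _ (by simp), self_mem_conjClass g⟩

/-- In a finite group, a set closed under conjugation by `c` is stable under it. -/
lemma mem_of_conj_mem [Finite G] {S : Set G} {c : G}
    (hS : ∀ u ∈ S, c * u * c⁻¹ ∈ S) {u : G} (hu : c * u * c⁻¹ ∈ S) : u ∈ S := by
  have hinj : Function.Injective (fun v : S => (⟨c * (v : G) * c⁻¹, hS v v.2⟩ : S)) := by
    intro v₁ v₂ h
    have h' : c * (v₁ : G) * c⁻¹ = c * (v₂ : G) * c⁻¹ := congrArg Subtype.val h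
    ext
    exact mul_left_cancel (mul_right_cancel h')
  obtain ⟨v, hv⟩ := Finite.surjective_of_injective hinj ⟨c * u * c⁻¹, hu⟩
  have h' : c * (v : G) * c⁻¹ = c * u * c⁻¹ := congrArg Subtype.val hv
  have : (v : G) = u := mul_left_cancel (mul_right_cancel h')
  exact this ▸ v.2

lemma conj_mem_subrackB_iff [Finite G] {x y : G} (c : G)
    (hc : c ∈ subrackClosure {x, y}) (u : G) :
    u ∈ subrackB x y ↔ c * u * c⁻¹ ∈ subrackB x y := by
  have hfwd : ∀ v ∈ subrackB x y, c * v * c⁻¹ ∈ subrackB x y := by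
    intro v hv
    exact ⟨isSubrack_subrackClosure _ c hc v hv.1, conj_mem_conjClass hv.2 c⟩
  exact ⟨fun hu => hfwd u hu, fun hu => mem_of_conj_mem hfwd hu⟩

/-- If a set is stable under conjugation by `x` and `g` then it is stable under
conjugation by every element of the subgroup generated by `x` and `g`. -/
lemma stable_of_closure {S : Set G} {x g : G}
    (hx : ∀ u, u ∈ S ↔ x * u * x⁻¹ ∈ S) (hg : ∀ u, u ∈ S ↔ g * u * g⁻¹ ∈ S) :
    ∀ w ∈ Subgroup.closure ({x, g} : Set G), ∀ u, u ∈ S ↔ w * u * w⁻¹ ∈ S := by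
  intro w hw
  induction hw using Subgroup.closure_induction with
  | mem t ht =>
    rcases ht with rfl | ht
    · exact hx
    · rcases ht with rfl; exact hg
  | one => intro u; simp
  | mul w₁ w₂ hw₁ hw₂ ih₁ ih₂ =>
    intro u
    have : w₁ * w₂ * u * (w₁ * w₂)⁻¹ = w₁ * (w₂ * u * w₂⁻¹) * w₁⁻¹ := by group
    rw [this, ← ih₁, ← ih₂]
  | inv w hw ih =>
    intro u
    have h1 := ih (w⁻¹ * u * w⁻¹⁻¹)
    have : w * (w⁻¹ * u * w⁻¹⁻¹) * w⁻¹ = u := by group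
    rw [this] at h1
    exact h1.symm

/-- The subrack closure of `{x, g}` is contained in the union of the conjugation
orbits of `x` and `g` under the subgroup generated by `x` and `g`. -/
lemma subrackClosure_pair_subset (x g : G) :
    subrackClosure {x, g} ⊆
      {u | ∃ w ∈ Subgroup.closure ({x, g} : Set G), u = w * x * w⁻¹ ∨ u = w * g * w⁻¹} := by
  apply subrackClosure_subset
  · intro u hu v hv
    obtain ⟨w, hw, hc⟩ := hu
    obtain ⟨w', hw', hc'⟩ := hv
    have hxH : x ∈ Subgroup.closure ({x, g} : Set G) :=
      Subgroup.subset_closure (by simp)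
    have hgH : g ∈ Subgroup.closure ({x, g} : Set G) :=
      Subgroup.subset_closure (by simp)
    have huH : u ∈ Subgroup.closure ({x, g} : Set G) := by
      rcases hc with rfl | rfl
      · exact mul_mem (mul_mem hw hxH) (inv_mem hw)
      · exact mul_mem (mul_mem hw hgH) (inv_mem hw)
    refine ⟨u * w', mul_mem huH hw', ?_⟩
    rcases hc' with rfl | rfl
    · left; group
    · right; group
  · intro t ht
    rcases ht with rfl | ht
    · exact ⟨1, one_mem _, Or.inl (by group)⟩
    · rcases ht with rfl; exact ⟨1, one_mem _, Or.inr (by group)⟩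

/-- Key lemma: if `g ∼ₓ h` then `h` lies in the conjugation orbit of `g` under
the subgroup generated by `x` and `g`. -/
lemma pseudoRel_conj [Finite G] {x g h : G} (hR : pseudoRel x g h) :
    ∃ w ∈ Subgroup.closure ({x, g} : Set G), h = w * g * w⁻¹ := by
  have hh : h ∈ subrackB x g := (hR g).mp (self_mem_subrackB x g)
  have hg' : g ∈ subrackB x h := (hR h).mpr (self_mem_subrackB x h)
  have hh1 := subrackClosure_pair_subset x g hh.1
  obtain ⟨w, hw, hc⟩ := hh1
  rcases hc with rfl | rfl
  · -- h = w * x * w⁻¹ conjugate of x; use membership of g in closure {x, h}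
    set H := Subgroup.closure ({x, g} : Set G) with hH
    have hxH : x ∈ H := Subgroup.subset_closure (by simp)
    have hhH : w * x * w⁻¹ ∈ H := mul_mem (mul_mem hw hxH) (inv_mem hw)
    have hle : Subgroup.closure ({x, w * x * w⁻¹} : Set G) ≤ H := by
      rw [Subgroup.closure_le]
      intro t ht
      rcases ht with rfl | ht
      · exact hxH
      · rcases ht with rfl; exact hhH
    have hg1 := subrackClosure_pair_subset x (w * x * w⁻¹) hg'.1
    obtain ⟨v, hv, hc'⟩ := hg1
    have hvH : v ∈ H := hle hv
    rcases hc' with hgx | hgh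
    · -- g = v * x * v⁻¹, so h = w * x * w⁻¹ = (w * v⁻¹) * g * (w * v⁻¹)⁻¹
      refine ⟨w * v⁻¹, mul_mem hw (inv_mem hvH), ?_⟩
      rw [hgx]; group
    · -- g = v * h * v⁻¹, so h = v⁻¹ * g * v
      refine ⟨v⁻¹, inv_mem hvH, ?_⟩
      rw [hgh]; group
  · exact ⟨w, hw, rfl⟩

end Aux

theorem assocAbelianSet_is_abelian_subgroup
    {G : Type*} [Group G] [Finite G] (hZ : Subgroup.center G = ⊥) (a : G) :
    ∃ A : Subgroup G, (A : Set G) = assocAbelianSet a ∧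
      ∀ x ∈ A, ∀ y ∈ A, x * y = y * x := by
  -- the subgroup of elements whose conjugation stabilizes every `B_G(a, y)`
  refine ⟨{ carrier := {x : G | ∀ u y : G, u ∈ subrackB a y ↔ x * u * x⁻¹ ∈ subrackB a y}
            one_mem' := by intro u y; simp
            mul_mem' := by
              intro x y hx hy u z
              have h1 := hy u z
              have h2 := hx (y * u * y⁻¹) z
              have : x * y * u * (x * y)⁻¹ = x * (y * u * y⁻¹) * x⁻¹ := by group
              rw [this, ← h2, ← h1]
            inv_mem' := by
              intro x hx u y
              have h1 := hx (x⁻¹ * u * x⁻¹⁻¹) y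
              have : x * (x⁻¹ * u * x⁻¹⁻¹) * x⁻¹ = u := by group
              rw [this] at h1
              exact h1.symm }, ?_, ?_⟩
  · -- set equality with assocAbelianSet a
    ext x
    simp only [Subgroup.coe_set_mk, Set.mem_setOf_eq]
    constructor
    · -- P ⊆ A
      intro hP g h hgh
      have key : ∀ g h : G, pseudoRel x g h → ∀ y, g ∈ subrackB a y → h ∈ subrackB a y := by
        intro g h hgh y hgy
        obtain ⟨w, hw, rfl⟩ := pseudoRel_conj hgh
        have hxst : ∀ u, u ∈ subrackB a y ↔ x * u * x⁻¹ ∈ subrackB a y := fun u => hP u y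
        have hgst : ∀ u, u ∈ subrackB a y ↔ g * u * g⁻¹ ∈ subrackB a y := by
          intro u
          have hfwd : ∀ v ∈ subrackB a y, g * v * g⁻¹ ∈ subrackB a y := by
            intro v hv
            exact ⟨isSubrack_subrackClosure _ g hgy.1 v hv.1, conj_mem_conjClass hv.2 g⟩
          exact ⟨fun hu => hfwd u hu, fun hu => mem_of_conj_mem hfwd hu⟩
        exact (stable_of_closure hxst hgst w hw g).mp hgy
      intro y
      have hgh' : pseudoRel x h g := fun y => (hgh y).symm
      exact ⟨key g h hgh y, key h g hgh' y⟩
    · -- A ⊆ P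
      intro hA u y
      have hrel : pseudoRel x u (x * u * x⁻¹) := by
        intro z
        exact conj_mem_subrackB_iff x (subset_subrackClosure _ (by simp)) u
      exact hA u (x * u * x⁻¹) hrel y
  · -- commutativity
    intro x hx y hy
    simp only [Subgroup.mem_mk, Set.mem_setOf_eq] at hx hy
    -- any element of P commutes with any element commuting with a
    have key : ∀ z : G, (∀ u w : G, u ∈ subrackB a w ↔ z * u * z⁻¹ ∈ subrackB a w) →
        ∀ c : G, c * a = a * c → z * c = c * z := by
      intro z hz c hc
      have hcB : c ∈ subrackB a c := self_mem_subrackB a c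
      have h1 : z * c * z⁻¹ ∈ subrackB a c := (hz c c).mp hcB
      have hsub : subrackClosure ({a, c} : Set G) ⊆ {a, c} := by
        apply subrackClosure_subset
        · intro u hu v hv
          have huv : u * v = v * u := by
            rcases hu with rfl | hu
            · rcases hv with rfl | hv
              · rfl
              · rcases hv with rfl; exact hc.symm
            · rcases hu with rfl
              rcases hv with rfl | hv
              · exact hc
              · rcases hv with rfl; rfl
          rcases hv with rfl | hv
          · left; rw [huv]; group
          · rcases hv with rfl; right
            rw [Set.mem_singleton_iff, huv]; group
        · exact le_refl _
      have h2 : z * c * z⁻¹ ∈ ({a, c} : Set G) := hsub h1.1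
      rcases h2 with h2 | h2
      · -- z * c * z⁻¹ = a forces c = a
        have haB : a ∈ subrackB a a := self_mem_subrackB a a
        have hBa : subrackB a a ⊆ {a} := by
          intro u hu
          have : subrackClosure ({a, a} : Set G) ⊆ {a} := by
            apply subrackClosure_subset
            · intro p hp q hq
              rcases hp with rfl
              rcases hq with rfl
              simp only [Set.mem_singleton_iff]; group
            · intro t ht; rcases ht with rfl | ht
              · rfl
              · exact ht
          exact this hu.1
        have hcA : c ∈ subrackB a a := by
          apply (hz c a).mpr
          rw [h2]; exact haB
        have hca : c = a := hBa hcA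
        rw [hca] at h2 ⊢
        exact mul_inv_eq_iff_eq_mul.mp h2
      · -- z * c * z⁻¹ = c
        rw [Set.mem_singleton_iff] at h2
        exact mul_inv_eq_iff_eq_mul.mp h2
    -- x commutes with a (take c = a), then y ∈ P commutes with x since x * a = a * x
    have hxa : x * a = a * x := key x hx a rfl
    exact (key y hy x hxa).symm
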